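/- Let p ∈ (0, 1/2] and let K be a p-core CRG all of whose vertices are black and which contains no three vertices pairwise joined by gray edges. Then g_K(p) ≥ p/2. -/

import Mathlib

/-- Colors for edges of a colored regularity graph. -/
inductive EColor : Type
  | white
  | gray
  | black
deriving DecidableEq

/-- A colored regularity graph (CRG) on a finite vertex type `V`: each vertex is
white or black (`vWhite v = true` means white), and each pair of distinct vertices
gets a symmetric edge color (white, gray or black). -/
structure CRG (V : Type) [Fintype V] where
  vWhite : V → Bool
  ecolor : V → V → EColor
  ecolor_symm : ∀ u v, ecolor u v = ecolor v u

namespace CRG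

variable {V : Type} [Fintype V] [DecidableEq V]

/-- The matrix `M_K(p)`. -/
noncomputable def M (K : CRG V) (p : ℝ) (u v : V) : ℝ :=
  if u = v then (if K.vWhite u then p else 1 - p)
  else
    match K.ecolor u v with
    | EColor.white => p
    | EColor.black => 1 - p
    | EColor.gray => 0

/-- The function `g_K(p)`: the minimum of `xᵀ M_K(p) x` over nonnegative weight
vectors summing to `1`. -/
noncomputable def g (K : CRG V) (p : ℝ) : ℝ :=
  sInf {r : ℝ | ∃ x : V → ℝ, (∀ v, 0 ≤ x v) ∧ (∑ v, x v) = 1 ∧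
    r = ∑ u, ∑ v, x u * K.M p u v * x v}

/-- The sub-CRG induced on a subset `s` of the vertices. -/
def sub (K : CRG V) (s : Finset V) : CRG {v // v ∈ s} where
  vWhite := fun v => K.vWhite v.1
  ecolor := fun u v => K.ecolor u.1 v.1
  ecolor_symm := fun u v => K.ecolor_symm u.1 v.1

/-- `K` is `p`-core if `g_K(p) < g_{K'}(p)` for every proper (nonempty) sub-CRG `K'`. -/
def IsPCore (K : CRG V) (p : ℝ) : Prop :=
  ∀ s : Finset V, s.Nonempty → s ≠ Finset.univ → K.g p < (K.sub s).g p

/-- `x` is an optimal weight vector for `K` at `p`. -/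
def IsOptWeight (K : CRG V) (p : ℝ) (x : V → ℝ) : Prop :=
  (∀ v, 0 ≤ x v) ∧ (∑ v, x v) = 1 ∧
    (∑ u, ∑ v, x u * K.M p u v * x v) = K.g p

/-- The gray degree `d_G(v)`: total weight of gray neighbors of `v`. -/
noncomputable def dG (K : CRG V) (x : V → ℝ) (v : V) : ℝ :=
  ∑ w ∈ Finset.univ.filter fun w => w ≠ v ∧ K.ecolor v w = EColor.gray, x w

/-- The white degree `d_W(v)`: total weight of white neighbors of `v`, including `v`
itself if `v` is white. -/
noncomputable def dW (K : CRG V) (x : V → ℝ) (v : V) : ℝ :=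
  (∑ w ∈ Finset.univ.filter fun w => w ≠ v ∧ K.ecolor v w = EColor.white, x w) +
    (if K.vWhite v then x v else 0)

/-- The black degree `d_B(v)`: total weight of black neighbors of `v`, including `v`
itself if `v` is black. -/
noncomputable def dB (K : CRG V) (x : V → ℝ) (v : V) : ℝ :=
  (∑ w ∈ Finset.univ.filter fun w => w ≠ v ∧ K.ecolor v w = EColor.black, x w) +
    (if K.vWhite v then 0 else x v)

/-- The number of gray neighbors of `v`. -/
def grayDeg (K : CRG V) (v : V) : ℕ :=
  (Finset.univ.filter fun w => w ≠ v ∧ K.ecolor v w = EColor.gray).card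

end CRG

/-- A graph `H` embeds in a CRG `K`, written `H ↦ K`. -/
def EmbedsIn {α : Type*} {V : Type} [Fintype V] (H : SimpleGraph α) (K : CRG V) : Prop :=
  ∃ φ : α → V,
    (∀ a b : α, H.Adj a b →
      (φ a = φ b ∧ K.vWhite (φ a) = false) ∨
      (φ a ≠ φ b ∧ (K.ecolor (φ a) (φ b) = EColor.black ∨ K.ecolor (φ a) (φ b) = EColor.gray))) ∧
    (∀ a b : α, a ≠ b → ¬H.Adj a b →
      (φ a = φ b ∧ K.vWhite (φ a) = true) ∨
      (φ a ≠ φ b ∧ (K.ecolor (φ a) (φ b) = EColor.white ∨ K.ecolor (φ a) (φ b) = EColor.gray)))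


/-!
Since `p ≤ 1 / 2`, every entry of `M_K(p)` of an all-black `K` is at least `p` times the
corresponding entry of `J - A`, where `A` is the adjacency matrix of the gray graph; hence
`xᵀ M_K(p) x ≥ p (1 - xᵀ A x)` on the simplex. The gray graph is triangle-free, and then
`xᵀ A x ≤ 1 / 2` (Motzkin–Straus): adjacent vertices have disjoint neighbourhoods, so
`d = A x` satisfies `d u + d v ≤ 1` on edges; summing over edges gives
`2 ∑ x_u d_u² ≤ xᵀ A x`, while Jensen gives `(xᵀ A x)² ≤ ∑ x_u d_u²`.
-/

open Finset Matrix

namespace SimpleGraph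

variable {V : Type*} [Fintype V] {G : SimpleGraph V} [DecidableRel G.Adj] {x : V → ℝ}

theorem sum_neighborFinset_add_sum_neighborFinset_le_one (hG : G.CliqueFree 3) (hx : 0 ≤ x)
    (hs : ∑ v, x v = 1) {u v : V} (huv : G.Adj u v) :
    ∑ w ∈ G.neighborFinset u, x w + ∑ w ∈ G.neighborFinset v, x w ≤ 1 := by
  classical
  have hdisj : Disjoint (G.neighborFinset u) (G.neighborFinset v) := by
    refine Finset.disjoint_left.2 fun w hwu hwv => hG {u, v, w} ?_
    rw [mem_neighborFinset] at hwu hwv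
    exact is3Clique_triple_iff.2 ⟨huv, hwu, hwv⟩
  rw [← sum_union hdisj, ← hs]
  exact sum_le_univ_sum_of_nonneg fun w => hx w

theorem dotProduct_adjMatrix_mulVec_le_half (hG : G.CliqueFree 3) (hx : 0 ≤ x)
    (hs : ∑ v, x v = 1) : x ⬝ᵥ (G.adjMatrix ℝ *ᵥ x) ≤ 1 / 2 := by
  set A := G.adjMatrix ℝ
  set d := A *ᵥ x
  have hd : ∀ u, d u = ∑ v, A u v * x v := fun u => rfl
  have hQ : x ⬝ᵥ d = ∑ u, ∑ v, A u v * (x u * x v) := by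
    simp only [dotProduct, hd, mul_sum]
    exact sum_congr rfl fun _ _ => sum_congr rfl fun _ _ => by ring
  have hjensen : (x ⬝ᵥ d) ^ 2 ≤ ∑ u, x u * d u ^ 2 := by
    simpa [dotProduct, smul_eq_mul] using
      even_two.convexOn_pow.map_sum_le (t := univ) (fun i _ => hx i) hs
        fun i _ => Set.mem_univ (d i)
  have hsymm : ∑ u, ∑ v, A u v * (x u * x v * (d u + d v)) = 2 * ∑ u, x u * d u ^ 2 := by
    have hA : ∀ u v, A u v = A v u := fun u v => by simp only [A, adjMatrix_apply, G.adj_comm]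
    have hdiag : ∀ u, ∑ v, A u v * (x u * x v * d u) = x u * d u ^ 2 := fun u =>
      calc ∑ v, A u v * (x u * x v * d u) = x u * d u * ∑ v, A u v * x v := by
            rw [mul_sum]; exact sum_congr rfl fun v _ => by ring
        _ = x u * d u ^ 2 := by rw [← hd]; ring
    have hswap :
        ∑ u, ∑ v, A u v * (x u * x v * d v) = ∑ u, ∑ v, A u v * (x u * x v * d u) := by
      rw [sum_comm]
      exact sum_congr rfl fun u _ => sum_congr rfl fun v _ => by rw [hA]; ring
    simp only [mul_add, sum_add_distrib] at hswap ⊢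
    rw [hswap, sum_congr rfl fun u _ => hdiag u]
    ring
  have hedge :
      ∑ u, ∑ v, A u v * (x u * x v * (d u + d v)) ≤ ∑ u, ∑ v, A u v * (x u * x v) := by
    refine sum_le_sum fun u _ => sum_le_sum fun v _ => ?_
    by_cases huv : G.Adj u v
    · have := sum_neighborFinset_add_sum_neighborFinset_le_one hG hx hs huv
      simp only [A, adjMatrix_apply, if_pos huv, one_mul, d, adjMatrix_mulVec_apply]
      exact mul_le_of_le_one_right (mul_nonneg (hx u) (hx v)) this
    · simp [A, huv]
  have hQ2 : 2 * (x ⬝ᵥ d) ^ 2 ≤ x ⬝ᵥ d := by linarith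
  nlinarith

end SimpleGraph

namespace CRG

variable {V : Type} [Fintype V]

def grayGraph (K : CRG V) : SimpleGraph V where
  Adj u v := u ≠ v ∧ K.ecolor u v = EColor.gray
  symm := ⟨fun u v h => ⟨h.1.symm, K.ecolor_symm u v ▸ h.2⟩⟩
  loopless := ⟨fun _ h => h.1 rfl⟩

instance [DecidableEq V] (K : CRG V) : DecidableRel K.grayGraph.Adj :=
  fun u v => inferInstanceAs (Decidable (u ≠ v ∧ K.ecolor u v = EColor.gray))

theorem grayGraph_cliqueFree_three (K : CRG V)
    (htri : ¬∃ u v w : V, u ≠ v ∧ u ≠ w ∧ v ≠ w ∧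
      K.ecolor u v = EColor.gray ∧ K.ecolor u w = EColor.gray ∧
      K.ecolor v w = EColor.gray) :
    K.grayGraph.CliqueFree 3 := by
  classical
  intro s hs
  obtain ⟨a, b, c, hab, hac, hbc, -⟩ := SimpleGraph.is3Clique_iff.1 hs
  exact htri ⟨a, b, c, hab.1, hac.1, hbc.1, hab.2, hac.2, hbc.2⟩

variable [DecidableEq V]

theorem mul_one_sub_adjMatrix_grayGraph_le_M (K : CRG V) (hblack : ∀ v, K.vWhite v = false)
    {p : ℝ} (hp : p ≤ 1 / 2) (u v : V) :
    p * (1 - K.grayGraph.adjMatrix ℝ u v) ≤ K.M p u v := by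
  have hp' : p ≤ 1 - p := by linarith
  rw [SimpleGraph.adjMatrix_apply]
  by_cases huv : u = v
  · subst huv
    simpa [M, hblack] using hp'
  · cases hc : K.ecolor u v <;> simp [M, grayGraph, huv, hc, hp']

theorem le_g_of_forall_le [Nonempty V] (K : CRG V) {p c : ℝ}
    (h : ∀ x : V → ℝ, (∀ v, 0 ≤ x v) → ∑ v, x v = 1 →
      c ≤ ∑ u, ∑ v, x u * K.M p u v * x v) :
    c ≤ K.g p := by
  refine le_csInf ⟨_, fun _ => (Fintype.card V : ℝ)⁻¹, fun _ => by positivity, ?_, rfl⟩ ?_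
  · simp
  · rintro r ⟨x, hx, hs, rfl⟩
    exact h x hx hs

theorem div_two_le_quadForm_of_cliqueFree (K : CRG V) (hblack : ∀ v, K.vWhite v = false)
    (hK : K.grayGraph.CliqueFree 3) {p : ℝ} (hp0 : 0 ≤ p) (hp : p ≤ 1 / 2)
    {x : V → ℝ} (hx : ∀ v, 0 ≤ x v) (hs : ∑ v, x v = 1) :
    p / 2 ≤ ∑ u, ∑ v, x u * K.M p u v * x v := by
  set A := K.grayGraph.adjMatrix ℝ
  have hMS := SimpleGraph.dotProduct_adjMatrix_mulVec_le_half hK hx hs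
  calc p / 2 ≤ p * (1 - x ⬝ᵥ (A *ᵥ x)) := by nlinarith
    _ = p * (∑ u, ∑ v, x u * x v - x ⬝ᵥ (A *ᵥ x)) := by
      rw [← sum_mul_sum, hs, one_mul]
    _ = ∑ u, ∑ v, x u * (p * (1 - A u v)) * x v := by
      simp only [dotProduct, mulVec, mul_sum, ← sum_sub_distrib]
      exact sum_congr rfl fun u _ => sum_congr rfl fun v _ => by ring
    _ ≤ ∑ u, ∑ v, x u * K.M p u v * x v := by
      gcongr with u _ v _
      · exact hx v
      · exact hx u
      · exact K.mul_one_sub_adjMatrix_grayGraph_le_M hblack hp u v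

end CRG

theorem g_ge_half_p_of_no_gray_triangle_general {V : Type} [Fintype V] [DecidableEq V] [Nonempty V]
    (p : ℝ) (hp : p ∈ Set.Ioc (0 : ℝ) (1 / 2))
    (K : CRG V)
    (hblack : ∀ v : V, K.vWhite v = false)
    (htri : ¬∃ u v w : V, u ≠ v ∧ u ≠ w ∧ v ≠ w ∧
      K.ecolor u v = EColor.gray ∧ K.ecolor u w = EColor.gray ∧
      K.ecolor v w = EColor.gray) :
    p / 2 ≤ K.g p :=
  K.le_g_of_forall_le fun _ hx hs =>
    K.div_two_le_quadForm_of_cliqueFree hblack (K.grayGraph_cliqueFree_three htri)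
      hp.1.le hp.2 hx hs

theorem g_ge_half_p_of_no_gray_triangle {V : Type} [Fintype V] [DecidableEq V] [Nonempty V]
    (p : ℝ) (hp : p ∈ Set.Ioc (0 : ℝ) (1 / 2))
    (K : CRG V) (hcore : K.IsPCore p)
    (hblack : ∀ v : V, K.vWhite v = false)
    (htri : ¬∃ u v w : V, u ≠ v ∧ u ≠ w ∧ v ≠ w ∧
      K.ecolor u v = EColor.gray ∧ K.ecolor u w = EColor.gray ∧
      K.ecolor v w = EColor.gray) :
    p / 2 ≤ K.g p :=
  g_ge_half_p_of_no_gray_triangle_general p hp K hblack htri
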